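/- arXiv:math/9406209 — 4 statements merged into one kernel-verified Lean document; each statement's English description precedes it below -/
import Mathlib

section
/- Let $X$ be a Banach lattice and let $x, y \in X$. Then the elements $x - S_y(x)$ and $y - S_x(y)$ are disjoint, i.e. $|x - S_y(x)| \wedge |y - S_x(y)| = 0$. -/
/-- `S u x = x⁺ ⊓ |u| - x⁻ ⊓ |u|` where `x⁺ = x ⊔ 0` and `x⁻ = (-x) ⊔ 0`. -/
def latticeTruncation {X : Type*} [Lattice X] [AddCommGroup X] (u x : X) : X :=
  (x ⊔ 0) ⊓ |u| - ((-x) ⊔ 0) ⊓ |u|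

/-!
Writing `x = x⁺ - x⁻`, the remainder `x - S_y(x)` is `(x⁺ - |y|)⁺ - (x⁻ - |y|)⁺`, a difference
of two positive elements each below `(|x| - |y|)⁺`; hence `|x - S_y(x)| ≤ (|x| - |y|)⁺`.
Symmetrically `|y - S_x(y)| ≤ (|y| - |x|)⁺ = (|x| - |y|)⁻`, and the positive and negative
parts of an element are disjoint.
-/

section LatticeOrderedGroup

variable {X : Type*} [Lattice X] [AddCommGroup X] [AddLeftMono X]

lemma posPart_le_abs (x : X) : x⁺ ≤ |x| := sup_le (le_abs_self x) (abs_nonneg x)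

lemma negPart_le_abs (x : X) : x⁻ ≤ |x| := sup_le (neg_le_abs x) (abs_nonneg x)

lemma sub_inf_eq_posPart_sub (a b : X) : a - a ⊓ b = (a - b)⁺ := by
  rw [inf_eq_sub_posPart_sub, sub_sub_cancel]

lemma abs_sub_le_sup_of_nonneg {a b : X} (ha : 0 ≤ a) (hb : 0 ≤ b) : |a - b| ≤ a ⊔ b :=
  abs_le'.2 ⟨(sub_le_self a hb).trans le_sup_left,
    neg_sub a b ▸ (sub_le_self b ha).trans le_sup_right⟩

lemma sub_latticeTruncation (u x : X) :
    x - latticeTruncation u x = (x⁺ - |u|)⁺ - (x⁻ - |u|)⁺ := by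
  rw [← sub_inf_eq_posPart_sub, ← sub_inf_eq_posPart_sub, latticeTruncation, ← posPart_def,
    ← negPart_def]
  nth_rewrite 1 [← posPart_sub_negPart x]
  abel

lemma abs_sub_latticeTruncation_le (u x : X) :
    |x - latticeTruncation u x| ≤ (|x| - |u|)⁺ := by
  rw [sub_latticeTruncation]
  exact (abs_sub_le_sup_of_nonneg (posPart_nonneg _) (posPart_nonneg _)).trans <|
    sup_le (posPart_mono (sub_le_sub_right (posPart_le_abs x) _))
      (posPart_mono (sub_le_sub_right (negPart_le_abs x) _))

end LatticeOrderedGroup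

theorem disjoint_sub_latticeTruncation_general {X : Type*} [NormedAddCommGroup X] [Lattice X]
    [IsOrderedAddMonoid X] (x y : X) :
    |x - latticeTruncation y x| ⊓ |y - latticeTruncation x y| = 0 := by
  refine le_antisymm ?_ (le_inf (abs_nonneg _) (abs_nonneg _))
  calc |x - latticeTruncation y x| ⊓ |y - latticeTruncation x y|
      ≤ (|x| - |y|)⁺ ⊓ (|y| - |x|)⁺ :=
        inf_le_inf (abs_sub_latticeTruncation_le y x) (abs_sub_latticeTruncation_le x y)
    _ = (|x| - |y|)⁺ ⊓ (|x| - |y|)⁻ := by rw [← posPart_neg, neg_sub]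
    _ = 0 := posPart_inf_negPart_eq_zero _

/-- In a Banach lattice `X`, for all `x y : X`, the elements `x - S_y(x)` and
`y - S_x(y)` are disjoint. -/
theorem disjoint_sub_latticeTruncation {X : Type*} [NormedAddCommGroup X] [Lattice X]
    [HasSolidNorm X] [IsOrderedAddMonoid X]
    [CompleteSpace X] (x y : X) :
    |x - latticeTruncation y x| ⊓ |y - latticeTruncation x y| = 0 :=
  disjoint_sub_latticeTruncation_general x y
end

section
/- Let $X$ be a lattice-ordered abelian group and $x, y \in X$. Then $y - S_x(y) = (y^+ - y^+ \wedge |x|) - (y^- - y^- \wedge |x|)$, both $y^+ - y^+ \wedge |x| \ge 0$ and $y^- - y^- \wedge |x| \ge 0$, and $(y^+ - y^+ \wedge |x|) \wedge (y^- - y^- \wedge |x|) = 0$. -/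
section LatticeOrderedGroup

variable {α : Type*} [Lattice α] [AddCommGroup α] [AddLeftMono α]

theorem sub_inf_nonneg (a b : α) : 0 ≤ a - a ⊓ b :=
  sub_nonneg.2 inf_le_left

theorem sub_latticeTruncation_s1 (u x : α) :
    x - latticeTruncation u x = ((x ⊔ 0) - (x ⊔ 0) ⊓ |u|) - (((-x) ⊔ 0) - ((-x) ⊔ 0) ⊓ |u|) := by
  nth_rewrite 1 [← posPart_sub_negPart x]
  rw [latticeTruncation, posPart_def, negPart_def]
  abel

theorem sub_inf_inf_sub_inf_eq_zero {a b c : α} (hab : a ⊓ b = 0) (hc : 0 ≤ c) :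
    (a - a ⊓ c) ⊓ (b - b ⊓ c) = 0 := by
  have ha : 0 ≤ a := hab ▸ inf_le_left
  have hb : 0 ≤ b := hab ▸ inf_le_right
  refine le_antisymm ?_ (le_inf (sub_inf_nonneg a c) (sub_inf_nonneg b c))
  calc (a - a ⊓ c) ⊓ (b - b ⊓ c) ≤ a ⊓ b := by
        gcongr
        · exact sub_le_self _ (le_inf ha hc)
        · exact sub_le_self _ (le_inf hb hc)
    _ = 0 := hab

end LatticeOrderedGroup

/-- In a lattice-ordered abelian group `X`, for `x y : X`:
`y - S_x(y) = (y⁺ - y⁺ ⊓ |x|) - (y⁻ - y⁻ ⊓ |x|)`, both parts are nonnegative,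
and they are disjoint (their infimum is `0`). -/
theorem sub_latticeTruncation_decomposition {X : Type*} [Lattice X] [AddCommGroup X]
    [CovariantClass X X (· + ·) (· ≤ ·)] (x y : X) :
    y - latticeTruncation x y = ((y ⊔ 0) - (y ⊔ 0) ⊓ |x|) - (((-y) ⊔ 0) - ((-y) ⊔ 0) ⊓ |x|) ∧
    0 ≤ (y ⊔ 0) - (y ⊔ 0) ⊓ |x| ∧
    0 ≤ ((-y) ⊔ 0) - ((-y) ⊔ 0) ⊓ |x| ∧
    ((y ⊔ 0) - (y ⊔ 0) ⊓ |x|) ⊓ (((-y) ⊔ 0) - ((-y) ⊔ 0) ⊓ |x|) = 0 :=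
  ⟨sub_latticeTruncation_s1 x y, sub_inf_nonneg _ _, sub_inf_nonneg _ _,
    sub_inf_inf_sub_inf_eq_zero (posPart_inf_negPart_eq_zero y) (abs_nonneg x)⟩
end

section
/- Let $X$ be a lattice-ordered abelian group and $x, y \in X$. Then $(y^+ - y^+ \wedge |x|) \wedge (x^+ - x^+ \wedge |y|) = 0$. -/
section

variable {α : Type*} [Lattice α] [AddCommGroup α] [AddLeftMono α]

theorem sub_inf_inf_sub_inf_self (a b : α) : (a - a ⊓ b) ⊓ (b - a ⊓ b) = 0 := by
  rw [← inf_sub, sub_self]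

theorem sub_inf_inf_sub_inf_eq_zero_of_le {a b u v : α} (hbu : b ≤ u) (hav : a ≤ v) :
    (a - a ⊓ u) ⊓ (b - b ⊓ v) = 0 := by
  apply le_antisymm
  · calc (a - a ⊓ u) ⊓ (b - b ⊓ v)
        ≤ (a - a ⊓ b) ⊓ (b - b ⊓ a) := by gcongr
      _ = 0 := by rw [inf_comm b a, sub_inf_inf_sub_inf_self]
  · exact le_inf (sub_nonneg.2 inf_le_left) (sub_nonneg.2 inf_le_left)

theorem sup_zero_le_abs (a : α) : a ⊔ 0 ≤ |a| :=
  sup_le (le_abs_self a) (abs_nonneg a)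

end

/-- In a lattice-ordered abelian group `X`, for `x y : X`:
`(y⁺ - y⁺ ⊓ |x|) ⊓ (x⁺ - x⁺ ⊓ |y|) = 0`, where `z⁺ = z ⊔ 0`. -/
theorem inf_pos_parts_sub_eq_zero {X : Type*} [Lattice X] [AddCommGroup X]
    [CovariantClass X X (· + ·) (· ≤ ·)] (x y : X) :
    ((y ⊔ 0) - (y ⊔ 0) ⊓ |x|) ⊓ ((x ⊔ 0) - (x ⊔ 0) ⊓ |y|) = 0 :=
  sub_inf_inf_sub_inf_eq_zero_of_le (sup_zero_le_abs x) (sup_zero_le_abs y)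
end

section
/- Let $X$ be a Banach lattice and suppose there is a constant $c$ with $0 < c < 2$ such that $c\,\|x + y\| \ge \|x\| + \|y\|$ for all disjoint $x, y \in X$. Then for every $n \in \mathbb{N}$ and every family $(x_i)_{1 \le i \le 2^n}$ of pairwise disjoint elements of $X$, $\inf_{1 \le i \le 2^n} \|x_i\| \le (c/2)^n \big\|\sum_{i=1}^{2^n} x_i\big\|$. -/
/-! Split a disjoint family of `2 ^ (n + 1)` vectors into two halves of `2 ^ n` vectors. The two
partial sums are again disjoint, so the hypothesis gives `‖u‖ + ‖v‖ ≤ c ‖u + v‖` for them, and the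
smaller of the two has norm at most `(c / 2) ‖u + v‖`. Applying induction to that half produces a
member of norm at most `(c / 2) ^ (n + 1)` times the norm of the total sum. -/

open Finset

section LatticeOrderedGroup

variable {X : Type*} [AddCommGroup X] [Lattice X] [IsOrderedAddMonoid X]

lemma add_inf_le_inf_add_inf {a b z : X} (ha : 0 ≤ a) (hb : 0 ≤ b) (hz : 0 ≤ z) :
    (a + b) ⊓ z ≤ a ⊓ z + b ⊓ z := by
  rw [add_inf, inf_add, inf_add]
  exact le_inf (le_inf inf_le_left (inf_le_right.trans (le_add_of_nonneg_right hb)))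
    (le_inf (inf_le_right.trans (le_add_of_nonneg_left ha))
      (inf_le_right.trans (le_add_of_nonneg_left hz)))

lemma abs_add_inf_abs_eq_zero {a b z : X} (ha : |a| ⊓ |z| = 0) (hb : |b| ⊓ |z| = 0) :
    |a + b| ⊓ |z| = 0 := by
  refine le_antisymm ?_ (le_inf (abs_nonneg _) (abs_nonneg _))
  calc |a + b| ⊓ |z| ≤ (|a| + |b|) ⊓ |z| := inf_le_inf_right _ (abs_add_le a b)
    _ ≤ |a| ⊓ |z| + |b| ⊓ |z| :=
      add_inf_le_inf_add_inf (abs_nonneg a) (abs_nonneg b) (abs_nonneg z)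
    _ = 0 := by rw [ha, hb, add_zero]

lemma abs_sum_inf_abs_eq_zero {ι : Type*} {s : Finset ι} {f : ι → X} {z : X}
    (h : ∀ i ∈ s, |f i| ⊓ |z| = 0) : |∑ i ∈ s, f i| ⊓ |z| = 0 := by
  classical
  induction s using Finset.induction_on with
  | empty => simp
  | insert a s ha ih =>
    rw [sum_insert ha]
    rw [forall_mem_insert] at h
    exact abs_add_inf_abs_eq_zero h.1 (ih h.2)

lemma abs_sum_inf_abs_sum_eq_zero {ι κ : Type*} {s : Finset ι} {t : Finset κ}
    {f : ι → X} {g : κ → X} (h : ∀ i ∈ s, ∀ j ∈ t, |f i| ⊓ |g j| = 0) :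
    |∑ i ∈ s, f i| ⊓ |∑ j ∈ t, g j| = 0 :=
  abs_sum_inf_abs_eq_zero fun i hi => by
    rw [inf_comm]
    exact abs_sum_inf_abs_eq_zero fun j hj => by rw [inf_comm]; exact h i hi j hj

end LatticeOrderedGroup

section DisjointEstimate

variable {X : Type*} [NormedAddCommGroup X] [Lattice X] {c : ℝ}

lemma min_norm_le_half_mul_norm_add (hest : ∀ x y : X, |x| ⊓ |y| = 0 → ‖x‖ + ‖y‖ ≤ c * ‖x + y‖)
    {x y : X} (hxy : |x| ⊓ |y| = 0) : min ‖x‖ ‖y‖ ≤ c / 2 * ‖x + y‖ := by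
  have := hest x y hxy
  have := min_le_left ‖x‖ ‖y‖
  have := min_le_right ‖x‖ ‖y‖
  linarith

lemma exists_mem_norm_le_pow_mul_norm_sum [IsOrderedAddMonoid X] (hc : 0 ≤ c)
    (hest : ∀ x y : X, |x| ⊓ |y| = 0 → ‖x‖ + ‖y‖ ≤ c * ‖x + y‖) {ι : Type*} (x : ι → X) :
    ∀ (n : ℕ) (s : Finset ι), #s = 2 ^ n → (s : Set ι).Pairwise (fun i j => |x i| ⊓ |x j| = 0) →
      ∃ i ∈ s, ‖x i‖ ≤ (c / 2) ^ n * ‖∑ j ∈ s, x j‖ := by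
  classical
  intro n
  induction n with
  | zero =>
    intro s hs _
    obtain ⟨i, rfl⟩ := card_eq_one.mp hs
    exact ⟨i, mem_singleton_self i, by simp⟩
  | succ n ih =>
    intro s hs hx
    obtain ⟨t, hts, ht⟩ := exists_subset_card_eq (s := s) (n := 2 ^ n) (by rw [hs]; omega)
    have hu : #(s \ t) = 2 ^ n := by rw [card_sdiff_of_subset hts, hs, ht]; omega
    have hsum : ∑ j ∈ s, x j = ∑ j ∈ s \ t, x j + ∑ j ∈ t, x j := (sum_sdiff hts).symm
    have hdisj : |∑ j ∈ s \ t, x j| ⊓ |∑ j ∈ t, x j| = 0 :=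
      abs_sum_inf_abs_sum_eq_zero fun i hi j hj =>
        hx (sdiff_subset hi) (hts hj) fun hij => (mem_sdiff.mp hi).2 (hij ▸ hj)
    have hmin := min_norm_le_half_mul_norm_add hest hdisj
    rw [← hsum] at hmin
    have hpow : 0 ≤ (c / 2) ^ n := by positivity
    have step : ∀ u ⊆ s, #u = 2 ^ n → ‖∑ j ∈ u, x j‖ ≤ c / 2 * ‖∑ j ∈ s, x j‖ →
        ∃ i ∈ s, ‖x i‖ ≤ (c / 2) ^ (n + 1) * ‖∑ j ∈ s, x j‖ := by
      intro u hus hcard hsmall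
      obtain ⟨i, hi, hle⟩ := ih u hcard (hx.mono hus)
      refine ⟨i, hus hi, hle.trans ?_⟩
      calc (c / 2) ^ n * ‖∑ j ∈ u, x j‖ ≤ (c / 2) ^ n * (c / 2 * ‖∑ j ∈ s, x j‖) := by gcongr
        _ = (c / 2) ^ (n + 1) * ‖∑ j ∈ s, x j‖ := by ring
    rcases min_choice ‖∑ j ∈ s \ t, x j‖ ‖∑ j ∈ t, x j‖ with h | h <;> rw [h] at hmin
    · exact step _ sdiff_subset hu hmin
    · exact step t hts ht hmin

end DisjointEstimate

theorem iInf_norm_le_pow_mul_norm_sum_general {X : Type*} [NormedAddCommGroup X] [Lattice X]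
    [IsOrderedAddMonoid X]
    (c : ℝ) (hc0 : 0 < c)
    (hest : ∀ x y : X, |x| ⊓ |y| = 0 → ‖x‖ + ‖y‖ ≤ c * ‖x + y‖) :
    ∀ (n : ℕ) (x : Fin (2 ^ n) → X), (Pairwise fun i j => |x i| ⊓ |x j| = 0) →
      ⨅ i, ‖x i‖ ≤ (c / 2) ^ n * ‖∑ i, x i‖ := by
  intro n x hx
  obtain ⟨i, -, hi⟩ := exists_mem_norm_le_pow_mul_norm_sum hc0.le hest x n univ
    (by simp) (hx.set_pairwise _)
  exact (ciInf_le ⟨0, by rintro _ ⟨j, rfl⟩; exact norm_nonneg _⟩ i).trans hi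

/-- Let `X` be a Banach lattice and `0 < c < 2` a constant such that
`‖x‖ + ‖y‖ ≤ c‖x + y‖` for all disjoint `x, y`. Then for every `n` and every
pairwise disjoint family `(xᵢ)` of `2^n` elements,
`⨅ i, ‖xᵢ‖ ≤ (c/2)^n ‖∑ xᵢ‖`. -/
theorem iInf_norm_le_pow_mul_norm_sum {X : Type*} [NormedAddCommGroup X] [Lattice X]
    [HasSolidNorm X] [IsOrderedAddMonoid X]
    [CompleteSpace X] (c : ℝ) (hc0 : 0 < c) (hc2 : c < 2)
    (hest : ∀ x y : X, |x| ⊓ |y| = 0 → ‖x‖ + ‖y‖ ≤ c * ‖x + y‖) :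
    ∀ (n : ℕ) (x : Fin (2 ^ n) → X), (Pairwise fun i j => |x i| ⊓ |x j| = 0) →
      ⨅ i, ‖x i‖ ≤ (c / 2) ^ n * ‖∑ i, x i‖ :=
  iInf_norm_le_pow_mul_norm_sum_general c hc0 hest
end
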